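/- arXiv:math/0502214 — 2 statements merged into one kernel-verified Lean document; each statement's English description precedes it below -/
import Mathlib

section
/- For every odd prime p, there exists a quadratic nonresidue z modulo p with 1 < z < √p + 1, i.e., the least positive quadratic nonresidue modulo p is less than √p + 1. -/
/-!
Let `n` be the least natural number that is a nonresidue modulo `p`, and write `p = n q + r`
with `0 < r < n`. Then `n (q + 1) ≡ n - r` is a nonzero residue while `n` is not, so `q + 1` is
a nonresidue too, whence `n ≤ q + 1` and `n (n - 1) ≤ n q < p`.
-/

theorem IsSquare.of_mul_right {G : Type*} [CommGroupWithZero G] {a b : G} (hb : b ≠ 0)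
    (hab : IsSquare (a * b)) (hb' : IsSquare b) : IsSquare a := by
  simpa [hb] using hab.div hb'

theorem ZMod.exists_natCast_not_isSquare {p : ℕ} [Fact p.Prime] (hp : p ≠ 2) :
    ∃ n : ℕ, ¬ IsSquare (n : ZMod p) := by
  obtain ⟨a, ha⟩ := FiniteField.exists_nonsquare (F := ZMod p) (by rwa [ZMod.ringChar_zmod_n])
  exact ⟨a.val, by rwa [ZMod.natCast_zmod_val]⟩

namespace IsLeast

variable {p n : ℕ} [Fact p.Prime] (hn : IsLeast {k : ℕ | ¬ IsSquare (k : ZMod p)} n)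
include hn

theorem two_le_of_not_isSquare : 2 ≤ n := by
  by_contra! h
  interval_cases n
  · exact hn.1 ⟨0, by simp⟩
  · exact hn.1 ⟨1, by simp⟩

theorem lt_prime_of_not_isSquare : n < p :=
  (hn.2 (by simpa using hn.1 : ¬ IsSquare ((n % p : ℕ) : ZMod p))).trans_lt
    (Nat.mod_lt _ (Fact.out : p.Prime).pos)

theorem mul_pred_lt_prime_of_not_isSquare : n * (n - 1) < p := by
  have hp : p.Prime := Fact.out
  have h2n := hn.two_le_of_not_isSquare
  have hnp := hn.lt_prime_of_not_isSquare
  obtain ⟨q, r, hpqr, hrn, hr⟩ : ∃ q r, n * q + r = p ∧ r < n ∧ 0 < r :=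
    ⟨p / n, p % n, Nat.div_add_mod p n, Nat.mod_lt _ (by omega), Nat.pos_of_ne_zero fun h ↦ by
      rcases hp.eq_one_or_self_of_dvd n (Nat.dvd_of_mod_eq_zero h) with h | h <;> omega⟩
  have hnq : n * (q + 1) = p + (n - r) := by
    rw [Nat.mul_succ]
    omega
  have hq : q + 1 < p := by
    have : 2 * q ≤ n * q := Nat.mul_le_mul_right q h2n
    omega
  have hq0 : ((q + 1 : ℕ) : ZMod p) ≠ 0 := by
    rw [Ne, ZMod.natCast_eq_zero_iff]
    exact Nat.not_dvd_of_pos_of_lt (by omega) hq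
  have hsq : IsSquare ((n : ZMod p) * (q + 1 : ℕ)) := by
    rw [← Nat.cast_mul, hnq, Nat.cast_add, ZMod.natCast_self, zero_add]
    by_contra h
    have := hn.2 h
    omega
  have hnq' : n ≤ q + 1 := hn.2 fun h ↦ hn.1 (hsq.of_mul_right hq0 h)
  have : n * n ≤ p + (n - r) := hnq ▸ Nat.mul_le_mul_left n hnq'
  rw [Nat.mul_sub_one]
  omega

end IsLeast

theorem Nat.cast_lt_sqrt_add_one_of_mul_pred_lt {n p : ℕ} (h : n * (n - 1) < p) :
    (n : ℝ) < √p + 1 := by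
  obtain _ | k := n
  · rw [Nat.cast_zero]
    positivity
  have hk : ((k * k : ℕ) : ℝ) < p := by
    exact_mod_cast (Nat.mul_le_mul_right k k.le_succ).trans_lt h
  have : (k : ℝ) < √p := by
    rw [Real.lt_sqrt k.cast_nonneg]
    push_cast at hk
    linarith
  push_cast
  linarith

theorem exists_small_nonresidue (p : ℕ) (hp : p.Prime) (hodd : Odd p) :
    ∃ z : ℕ, 1 < z ∧ (z : ℝ) < Real.sqrt p + 1 ∧ ¬ IsSquare (z : ZMod p) := by
  have : Fact p.Prime := ⟨hp⟩
  have hp2 : p ≠ 2 := by rintro rfl; exact Nat.not_odd_iff_even.2 even_two hodd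
  obtain ⟨n, hn⟩ : ∃ n, IsLeast {k : ℕ | ¬ IsSquare (k : ZMod p)} n :=
    ⟨_, isLeast_csInf (ZMod.exists_natCast_not_isSquare hp2)⟩
  exact ⟨n, hn.two_le_of_not_isSquare,
    Nat.cast_lt_sqrt_add_one_of_mul_pred_lt hn.mul_pred_lt_prime_of_not_isSquare, hn.1⟩
end

section
/- Let F_q ⊆ F_{q^n} be an extension of finite fields of odd characteristic, let {α₀, ..., α_{n−1}} be a basis of F_{q^n} over F_q, and let T be the n×n trace matrix with entries T_{ij} = Tr(α_i α_j), where Tr : F_{q^n} → F_q is the trace. Then det(T) is a nonzero element of F_q, and det(T) is a square in F_q if n is odd, and a nonsquare in F_q if n is even. -/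
/-!
Let `φ : x ↦ x ^ q` be the Frobenius, which generates `Gal(K/F)`, and `M` the Moore matrix
`M i j = φ ^ j (b i)`. Since `Tr = ∑ j, φ ^ j`, the trace matrix is `M * Mᵀ`, so `det T = (det M)²`.
Applying `φ` to `M` rotates its columns cyclically, so `φ (det M) = (-1) ^ (n - 1) * det M`.
For odd `n`, `det M` is fixed by `φ` and hence lies in `F`; for even `n`, `φ` negates `det M`,
which in odd characteristic rules out `det M = ±√(det T) ∈ F`.
-/

open Matrix

section OrbitMatrix

variable {R A ι : Type*} [CommRing R] [CommRing A] [Algebra R A]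

/-- For the Frobenius of a finite field this is the Moore matrix `b i ^ q ^ j`. -/
def orbitMatrix (φ : A ≃ₐ[R] A) (b : ι → A) (m : ℕ) : Matrix ι (Fin m) A :=
  of fun i j => (φ ^ (j : ℕ)) (b i)

theorem orbitMatrix_map_eq_submatrix_finRotate {φ : A ≃ₐ[R] A} {m : ℕ} (hφ : φ ^ m = 1)
    (b : ι → A) :
    (orbitMatrix φ b m).map φ = (orbitMatrix φ b m).submatrix id (finRotate m) := by
  ext i j
  simp only [orbitMatrix, map_apply, submatrix_apply, of_apply, id]
  rw [← AlgEquiv.mul_apply, ← pow_succ']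
  rcases m with _ | m
  · exact j.elim0
  by_cases hj : j = Fin.last m
  · simp [hj, hφ]
  · rw [coe_finRotate_of_ne_last hj]

theorem map_det_orbitMatrix {φ : A ≃ₐ[R] A} {m : ℕ} (hφ : φ ^ m = 1) (b : Fin m → A) :
    φ (orbitMatrix φ b m).det = (-1) ^ (m - 1) * (orbitMatrix φ b m).det := by
  rw [AlgEquiv.map_det, AlgEquiv.mapMatrix_apply, orbitMatrix_map_eq_submatrix_finRotate hφ,
    det_permute', sign_finRotate]
  push_cast
  rfl

end OrbitMatrix

theorem Algebra.traceMatrix_map_eq_mul_transpose_of_bijective {F K ι κ : Type*} [Field F]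
    [Field K] [Algebra F K] [FiniteDimensional F K] [IsGalois F K] [Fintype κ]
    (b : ι → K) {σ : κ → Gal(K/F)} (hσ : Function.Bijective σ) :
    (traceMatrix F b).map (algebraMap F K) =
      (of fun i k => σ k (b i)) * (of fun i k => σ k (b i))ᵀ := by
  ext i j
  simp [traceMatrix_apply, trace_eq_sum_automorphisms, mul_apply, ← hσ.sum_comp]

section Squares

variable {F K : Type*} [Field F] [Field K] [Algebra F K]

theorem isSquare_of_algebraMap_eq_sq {a : F} {x : K} (ha : algebraMap F K a = x ^ 2)
    (hx : x ∈ Set.range (algebraMap F K)) : IsSquare a := by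
  obtain ⟨y, rfl⟩ := hx
  exact ⟨y, (algebraMap F K).injective (by rw [ha, map_mul, sq])⟩

theorem not_isSquare_of_algebraMap_eq_sq (φ : K ≃ₐ[F] K) (hK : ringChar K ≠ 2) {a : F} {x : K}
    (ha : algebraMap F K a = x ^ 2) (hφx : φ x = -x) (hx : x ≠ 0) : ¬IsSquare a := by
  rintro ⟨y, rfl⟩
  have hxy : x = algebraMap F K y ∨ x = -algebraMap F K y :=
    sq_eq_sq_iff_eq_or_eq_neg.1 (by rw [← ha, map_mul, sq])
  have hfixed : φ x = x := by rcases hxy with h | h <;> simp [h]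
  have h2x : (2 : K) * x = 0 := by linear_combination hφx - hfixed
  exact hx ((mul_eq_zero.1 h2x).resolve_left (Ring.two_ne_zero hK))

end Squares

namespace FiniteField

variable (F K : Type*) [Field F] [Fintype F] [Field K] [Finite K] [Algebra F K]

theorem mem_range_algebraMap_of_pow_card_eq_self {x : K} (hx : x ^ Fintype.card F = x) :
    x ∈ Set.range (algebraMap F K) := by
  have := Module.finite_of_finite F (M := K)
  rw [IsGalois.mem_range_algebraMap_iff_fixed]
  intro σ
  obtain ⟨k, rfl⟩ := (bijective_frobeniusAlgEquivOfAlgebraic_pow F K).2 σ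
  simp only [AlgEquiv.coe_pow, coe_frobeniusAlgEquivOfAlgebraic]
  exact Function.iterate_fixed hx k

end FiniteField

open FiniteField in
theorem trace_matrix_det_square_iff
    (F K : Type*) [Field F] [Field K] [Fintype F] [Fintype K]
    [Algebra F K] (hchar : Odd (ringChar F)) (n : ℕ)
    (b : Module.Basis (Fin n) F K)
    (T : Matrix (Fin n) (Fin n) F)
    (hT : ∀ i j, T i j = Algebra.trace F K (b i * b j)) :
    T.det ≠ 0 ∧ (Odd n → IsSquare T.det) ∧ (Even n → ¬ IsSquare T.det) := by
  obtain rfl : T = Algebra.traceMatrix F b := by ext i j; exact hT i j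
  obtain rfl : Module.finrank F K = n := (Module.finrank_eq_card_basis b).trans (Fintype.card_fin n)
  set φ := frobeniusAlgEquivOfAlgebraic F K
  set M := orbitMatrix φ b (Module.finrank F K)
  have hdet : algebraMap F K (Algebra.traceMatrix F b).det = M.det ^ 2 := by
    rw [RingHom.map_det, RingHom.mapMatrix_apply,
      Algebra.traceMatrix_map_eq_mul_transpose_of_bijective b
        (bijective_frobeniusAlgEquivOfAlgebraic_pow F K), det_mul, det_transpose, sq]
    rfl
  have hTdet : (Algebra.traceMatrix F b).det ≠ 0 := Algebra.discr_not_zero_of_basis F b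
  have hMdet : M.det ≠ 0 := fun h => hTdet ((algebraMap F K).injective (by simp [hdet, h]))
  have hφM : φ M.det = (-1) ^ (Module.finrank F K - 1) * M.det :=
    map_det_orbitMatrix (orderOf_frobeniusAlgEquivOfAlgebraic F K ▸ pow_orderOf_eq_one φ) b
  refine ⟨hTdet, fun hodd => ?_, fun heven => ?_⟩
  · refine isSquare_of_algebraMap_eq_sq hdet (mem_range_algebraMap_of_pow_card_eq_self F K ?_)
    show φ M.det = M.det
    rw [hφM, (Nat.Odd.sub_odd hodd odd_one).neg_one_pow, one_mul]
  · have hK : ringChar K ≠ 2 := by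
      rw [← Algebra.ringChar_eq F K]
      rintro h
      exact Nat.not_odd_iff_even.2 even_two (h ▸ hchar)
    refine not_isSquare_of_algebraMap_eq_sq φ hK hdet ?_ hMdet
    rw [hφM, (Nat.Even.sub_odd Module.finrank_pos heven odd_one).neg_one_pow, neg_one_mul]
end
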